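/- arXiv:1503.04566 — 3 statements merged into one kernel-verified Lean document; each statement's English description precedes it below -/
import Mathlib

section
/- Let h₁, h₂ be dual quaternions with h₁ conj(h₁) = h₂ conj(h₂) = 1 and h₁ + conj(h₁) = h₂ + conj(h₂) = 0 (normalized half-turns). Then for all parameters t₁, t₂, the product R(t₁,t₂) = (t₁ − h₁)(t₂ − h₂) satisfies: the dual part of R conj(R) is zero, i.e. R(t₁,t₂) lies on the Study quadric. -/
noncomputable section
open Quaternion DualNumber TrivSqZeroExt

/-- The dual quaternions: quaternions with dual-number coefficients. -/
abbrev DQ := Quaternion (DualNumber ℝ)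

/-- The dual quaternion `p + ε d` with primal part `p` and dual part `d`. -/
def toDQ (p d : Quaternion ℝ) : DQ :=
  Quaternion.dualNumberEquiv.symm (⟨p, d⟩ : DualNumber (Quaternion ℝ))

/-! Since `star h = -h` and `h * star h = 1`, a half-turn squares to `-1`; hence each factor
`t - h` of a 2R dyad has norm `t² + 1`, which is real and so central, and the norm of the product
`(t₁ - h₁)(t₂ - h₂)` is the product `(t₁² + 1)(t₂² + 1)` of the norms. -/

theorem mul_star_sub_eq_of_half_turn {A : Type*} [Ring A] [StarRing A] {c h : A}
    (hc : star c = c) (hch : Commute c h) (hn : h * star h = 1) (hh : h + star h = 0) :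
    (c - h) * star (c - h) = c * c + 1 := by
  have hs : star h = -h := eq_neg_of_add_eq_zero_right hh
  rw [star_sub, hc, hs, sub_neg_eq_add, mul_add, sub_mul, sub_mul, hch.eq, ← hn, hs]
  noncomm_ring

theorem mul_mul_star_mul_of_mul_star_eq_algebraMap {R A : Type*} [CommSemiring R] [Semiring A]
    [StarRing A] [Algebra R A] {x y : A} {b : R} (hy : y * star y = algebraMap R A b) :
    x * y * star (x * y) = algebraMap R A b * (x * star x) := by
  rw [star_mul, mul_assoc, ← mul_assoc y, hy, Algebra.left_comm]

theorem DQ.star_algebraMap (t : ℝ) :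
    star ((algebraMap ℝ DQ : ℝ →+* DQ) t) = (algebraMap ℝ DQ : ℝ →+* DQ) t :=
  Quaternion.star_coe _

theorem DQ.algebraMap_sub_mul_star_of_half_turn (t : ℝ) {h : DQ} (hn : h * star h = 1)
    (hh : h + star h = 0) :
    ((algebraMap ℝ DQ : ℝ →+* DQ) t - h) * star ((algebraMap ℝ DQ : ℝ →+* DQ) t - h) =
      (algebraMap ℝ DQ : ℝ →+* DQ) (t * t + 1) := by
  rw [map_add, map_mul, map_one]
  exact mul_star_sub_eq_of_half_turn (DQ.star_algebraMap t) (Algebra.commutes t h) hn hh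

/-- For normalized half-turns h₁, h₂, every product R(t₁,t₂) = (t₁−h₁)(t₂−h₂)
has real norm, i.e. lies on the Study quadric. -/
theorem twoR_dyad_on_study_quadric (h₁ h₂ : DQ)
    (h₁n : h₁ * star h₁ = 1) (h₂n : h₂ * star h₂ = 1)
    (h₁h : h₁ + star h₁ = 0) (h₂h : h₂ + star h₂ = 0) :
    ∀ t₁ t₂ : ℝ, ∃ a : ℝ,
      (((algebraMap ℝ DQ : ℝ →+* DQ) t₁ - h₁) * ((algebraMap ℝ DQ : ℝ →+* DQ) t₂ - h₂)) *
        star (((algebraMap ℝ DQ : ℝ →+* DQ) t₁ - h₁) * ((algebraMap ℝ DQ : ℝ →+* DQ) t₂ - h₂)) =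
      (algebraMap ℝ DQ : ℝ →+* DQ) a := by
  intro t₁ t₂
  -- The goal's `star` is `Quaternion`'s own instance rather than the `StarRing` projection, so
  -- the generic lemma is specialised in a hypothesis and matched up to defeq by `exact`.
  have hnorm := mul_mul_star_mul_of_mul_star_eq_algebraMap
    (x := (algebraMap ℝ DQ : ℝ →+* DQ) t₁ - h₁) (DQ.algebraMap_sub_mul_star_of_half_turn t₂ h₂n h₂h)
  rw [DQ.algebraMap_sub_mul_star_of_half_turn t₁ h₁n h₁h, ← map_mul] at hnorm
  exact ⟨_, hnorm⟩
end
end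

section
/- Four-projection closure lemma: Let E ⊂ P⁷ be a three-space and [u'₁],[v'₁],[u'₂],[v'₂] points spanning a three-space F with E ∩ F = ∅. Set U₁ = [u'₁] ∨ E, V₁ = [v'₁] ∨ E, U₂ = [u'₂] ∨ E, V₂ = [v'₂] ∨ E, and let μ₁: U₁ → V₁, ν₁: V₁ → U₂, μ₂: U₂ → V₂, ν₂: V₂ → U₁ be projections with centres [m₁], [n₁], [m₂], [n₂] respectively. If the four centres span a plane (are coplanar but not collinear), then the composition ν₂ ∘ μ₂ ∘ ν₁ ∘ μ₁ is the identity on U₁. -/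
open Submodule

section helpers

variable {V : Type*} [AddCommGroup V] [Module ℝ V]

lemma range_four' {α : Type*} (a b c d : α) : Set.range ![a, b, c, d] = {a, b, c, d} := by
  ext x
  simp [Matrix.range_cons, Matrix.range_empty]
  tauto

lemma mem_sup_span_singleton_iff (E : Submodule ℝ V) (u z : V) :
    z ∈ E ⊔ span ℝ {u} ↔ ∃ e ∈ E, ∃ t : ℝ, z = e + t • u := by
  rw [Submodule.mem_sup]
  constructor
  · rintro ⟨e, he, w, hw, rfl⟩
    rw [Submodule.mem_span_singleton] at hw
    obtain ⟨t, rfl⟩ := hw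
    exact ⟨e, he, t, rfl⟩
  · rintro ⟨e, he, t, rfl⟩
    exact ⟨e, he, t • u, Submodule.smul_mem _ _ (Submodule.mem_span_singleton_self u), rfl⟩

lemma indep_four {a b c d : V} (h : Module.finrank ℝ (span ℝ {a, b, c, d}) = 4) :
    LinearIndependent ℝ ![a, b, c, d] := by
  rw [linearIndependent_iff_card_eq_finrank_span]
  rw [Set.finrank, range_four', h]
  simp

lemma coeffs_zero (E : Submodule ℝ V) {a b c d : V}
    (hind : LinearIndependent ℝ ![a, b, c, d])
    (hEF : E ⊓ span ℝ {a, b, c, d} = ⊥)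
    {ca cb cc cd : ℝ} (h : ca • a + cb • b + cc • c + cd • d ∈ E) :
    ca = 0 ∧ cb = 0 ∧ cc = 0 ∧ cd = 0 := by
  have hmemF : ca • a + cb • b + cc • c + cd • d ∈ span ℝ {a, b, c, d} := by
    refine add_mem (add_mem (add_mem ?_ ?_) ?_) ?_ <;>
      exact smul_mem _ _ (subset_span (by simp))
  have h0 : ca • a + cb • b + cc • c + cd • d = 0 := by
    have : ca • a + cb • b + cc • c + cd • d ∈ E ⊓ span ℝ {a, b, c, d} := ⟨h, hmemF⟩
    rwa [hEF, Submodule.mem_bot] at this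
  have key := linearIndependent_iff'.1 hind Finset.univ ![ca, cb, cc, cd]
    (by simpa [Fin.sum_univ_four] using h0)
  exact ⟨key 0 (by simp), key 1 (by simp), key 2 (by simp), key 3 (by simp)⟩

lemma centre_decomp (E : Submodule ℝ V) (p q m : V) (f : V → V)
    (hp0 : p ≠ 0)
    (hpq : p ∉ E ⊔ span ℝ {q})
    (hmP : m ∉ E ⊔ span ℝ {p}) (hmQ : m ∉ E ⊔ span ℝ {q})
    (hf : ∀ x ∈ E ⊔ span ℝ {p}, x ≠ 0 →
      f x ∈ E ⊔ span ℝ {q} ∧ f x ≠ 0 ∧ ∃ a b : ℝ, f x = a • x + b • m) :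
    ∃ e ∈ E, ∃ α β : ℝ, α ≠ 0 ∧ β ≠ 0 ∧ m = e + α • p + β • q := by
  have hpmem : p ∈ E ⊔ span ℝ {p} :=
    (mem_sup_span_singleton_iff E p p).2 ⟨0, zero_mem _, 1, by simp⟩
  obtain ⟨hfp, hfp0, a, b, hab⟩ := hf p hpmem hp0
  obtain ⟨e, he, t, het⟩ := (mem_sup_span_singleton_iff E q (f p)).1 hfp
  have hb : b ≠ 0 := by
    rintro rfl
    rw [zero_smul, add_zero] at hab
    have ha : a ≠ 0 := by rintro rfl; rw [zero_smul] at hab; exact hfp0 hab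
    apply hpq
    have hp : p = a⁻¹ • f p := by rw [hab, smul_smul, inv_mul_cancel₀ ha, one_smul]
    rw [hp, het]
    exact (mem_sup_span_singleton_iff E q _).2
      ⟨a⁻¹ • e, smul_mem _ _ he, a⁻¹ * t, by rw [smul_add, smul_smul]⟩
  have hm : m = b⁻¹ • e + (-(b⁻¹ * a)) • p + (b⁻¹ * t) • q := by
    rw [het] at hab
    have hbm : b • m = e + t • q - a • p := by
      linear_combination (norm := module) (-1 : ℝ) • hab
    have : m = b⁻¹ • (b • m) := by rw [smul_smul, inv_mul_cancel₀ hb, one_smul]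
    rw [this, hbm]
    module
  refine ⟨b⁻¹ • e, smul_mem _ _ he, -(b⁻¹ * a), b⁻¹ * t, ?_, ?_, hm⟩
  · intro hα
    apply hmQ
    refine (mem_sup_span_singleton_iff E q m).2 ⟨b⁻¹ • e, smul_mem _ _ he, b⁻¹ * t, ?_⟩
    rw [hm, hα, zero_smul, add_zero]
  · intro hβ
    apply hmP
    refine (mem_sup_span_singleton_iff E p m).2 ⟨b⁻¹ • e, smul_mem _ _ he, -(b⁻¹ * a), ?_⟩
    rw [hm, hβ, zero_smul, add_zero]

end helpers

/-- Four-projection closure lemma: with E a three-space, F = span of the four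
points u'₁, v'₁, u'₂, v'₂ a three-space disjoint from E, Uᵢ = [u'ᵢ] ∨ E,
Vᵢ = [v'ᵢ] ∨ E, and projections μ₁ : U₁ → V₁, ν₁ : V₁ → U₂, μ₂ : U₂ → V₂,
ν₂ : V₂ → U₁ with centres m₁, n₁, m₂, n₂ spanning a plane, the composition
ν₂ ∘ μ₂ ∘ ν₁ ∘ μ₁ is (projectively) the identity on U₁. -/
theorem four_projection_closure
    (V : Type*) [AddCommGroup V] [Module ℝ V] (hdim : Module.finrank ℝ V = 8)
    (E : Submodule ℝ V) (hE : Module.finrank ℝ E = 4)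
    (u'₁ v'₁ u'₂ v'₂ : V)
    (hF : Module.finrank ℝ (span ℝ {u'₁, v'₁, u'₂, v'₂}) = 4)
    (hEF : E ⊓ span ℝ {u'₁, v'₁, u'₂, v'₂} = ⊥)
    (U₁ V₁ U₂ V₂ : Submodule ℝ V)
    (hU₁ : U₁ = E ⊔ span ℝ {u'₁}) (hV₁ : V₁ = E ⊔ span ℝ {v'₁})
    (hU₂ : U₂ = E ⊔ span ℝ {u'₂}) (hV₂ : V₂ = E ⊔ span ℝ {v'₂})
    (m₁ n₁ m₂ n₂ : V)
    (hm₁ : m₁ ≠ 0) (hn₁ : n₁ ≠ 0) (hm₂ : m₂ ≠ 0) (hn₂ : n₂ ≠ 0)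
    -- the four centres span a plane
    (hplane : Module.finrank ℝ (span ℝ {m₁, n₁, m₂, n₂}) = 3)
    -- the centres avoid source and target of their projections
    (hm₁U : m₁ ∉ U₁) (hm₁V : m₁ ∉ V₁) (hn₁V : n₁ ∉ V₁) (hn₁U : n₁ ∉ U₂)
    (hm₂U : m₂ ∉ U₂) (hm₂V : m₂ ∉ V₂) (hn₂V : n₂ ∉ V₂) (hn₂U : n₂ ∉ U₁)
    (μ₁ ν₁ μ₂ ν₂ : V → V)
    -- μ₁ is the projection U₁ → V₁ with centre [m₁], etc.
    (hμ₁ : ∀ x ∈ U₁, x ≠ 0 → μ₁ x ∈ V₁ ∧ μ₁ x ≠ 0 ∧ ∃ a b : ℝ, μ₁ x = a • x + b • m₁)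
    (hν₁ : ∀ x ∈ V₁, x ≠ 0 → ν₁ x ∈ U₂ ∧ ν₁ x ≠ 0 ∧ ∃ a b : ℝ, ν₁ x = a • x + b • n₁)
    (hμ₂ : ∀ x ∈ U₂, x ≠ 0 → μ₂ x ∈ V₂ ∧ μ₂ x ≠ 0 ∧ ∃ a b : ℝ, μ₂ x = a • x + b • m₂)
    (hν₂ : ∀ x ∈ V₂, x ≠ 0 → ν₂ x ∈ U₁ ∧ ν₂ x ≠ 0 ∧ ∃ a b : ℝ, ν₂ x = a • x + b • n₂) :
    ∀ x ∈ U₁, x ≠ 0 → ∃ c : ℝ, c ≠ 0 ∧ ν₂ (μ₂ (ν₁ (μ₁ x))) = c • x := by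
  subst hU₁ hV₁ hU₂ hV₂
  have hind : LinearIndependent ℝ ![u'₁, v'₁, u'₂, v'₂] := indep_four hF
  have K : ∀ {ca cb cc cd : ℝ}, ca • u'₁ + cb • v'₁ + cc • u'₂ + cd • v'₂ ∈ E →
      ca = 0 ∧ cb = 0 ∧ cc = 0 ∧ cd = 0 := fun h => coeffs_zero E hind hEF h
  have hu₁0 : u'₁ ≠ 0 := by simpa using hind.ne_zero 0
  have hv₁0 : v'₁ ≠ 0 := by simpa using hind.ne_zero 1
  have hu₂0 : u'₂ ≠ 0 := by simpa using hind.ne_zero 2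
  have hv₂0 : v'₂ ≠ 0 := by simpa using hind.ne_zero 3
  have hu₁v₁ : u'₁ ∉ E ⊔ span ℝ {v'₁} := by
    intro h
    obtain ⟨e, he, s, hs⟩ := (mem_sup_span_singleton_iff E v'₁ u'₁).1 h
    have hmem : (1 : ℝ) • u'₁ + (-s) • v'₁ + (0 : ℝ) • u'₂ + (0 : ℝ) • v'₂ ∈ E := by
      have heq : (1 : ℝ) • u'₁ + (-s) • v'₁ + (0 : ℝ) • u'₂ + (0 : ℝ) • v'₂ = e := by
        rw [hs]; module
      rw [heq]; exact he
    exact one_ne_zero (K hmem).1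
  have hv₁u₂ : v'₁ ∉ E ⊔ span ℝ {u'₂} := by
    intro h
    obtain ⟨e, he, s, hs⟩ := (mem_sup_span_singleton_iff E u'₂ v'₁).1 h
    have hmem : (0 : ℝ) • u'₁ + (1 : ℝ) • v'₁ + (-s) • u'₂ + (0 : ℝ) • v'₂ ∈ E := by
      have heq : (0 : ℝ) • u'₁ + (1 : ℝ) • v'₁ + (-s) • u'₂ + (0 : ℝ) • v'₂ = e := by
        rw [hs]; module
      rw [heq]; exact he
    exact one_ne_zero (K hmem).2.1
  have hu₂v₂ : u'₂ ∉ E ⊔ span ℝ {v'₂} := by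
    intro h
    obtain ⟨e, he, s, hs⟩ := (mem_sup_span_singleton_iff E v'₂ u'₂).1 h
    have hmem : (0 : ℝ) • u'₁ + (0 : ℝ) • v'₁ + (1 : ℝ) • u'₂ + (-s) • v'₂ ∈ E := by
      have heq : (0 : ℝ) • u'₁ + (0 : ℝ) • v'₁ + (1 : ℝ) • u'₂ + (-s) • v'₂ = e := by
        rw [hs]; module
      rw [heq]; exact he
    exact one_ne_zero (K hmem).2.2.1
  have hv₂u₁ : v'₂ ∉ E ⊔ span ℝ {u'₁} := by
    intro h
    obtain ⟨e, he, s, hs⟩ := (mem_sup_span_singleton_iff E u'₁ v'₂).1 h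
    have hmem : (-s) • u'₁ + (0 : ℝ) • v'₁ + (0 : ℝ) • u'₂ + (1 : ℝ) • v'₂ ∈ E := by
      have heq : (-s) • u'₁ + (0 : ℝ) • v'₁ + (0 : ℝ) • u'₂ + (1 : ℝ) • v'₂ = e := by
        rw [hs]; module
      rw [heq]; exact he
    exact one_ne_zero (K hmem).2.2.2
  -- decompositions of the centres
  obtain ⟨e₁, he₁, α₁, β₁, hα₁, hβ₁, hm₁d⟩ :=
    centre_decomp E u'₁ v'₁ m₁ μ₁ hu₁0 hu₁v₁ hm₁U hm₁V hμ₁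
  obtain ⟨e₂, he₂, α₂, β₂, hα₂, hβ₂, hn₁d⟩ :=
    centre_decomp E v'₁ u'₂ n₁ ν₁ hv₁0 hv₁u₂ hn₁V hn₁U hν₁
  obtain ⟨e₃, he₃, α₃, β₃, hα₃, hβ₃, hm₂d⟩ :=
    centre_decomp E u'₂ v'₂ m₂ μ₂ hu₂0 hu₂v₂ hm₂U hm₂V hμ₂
  obtain ⟨e₄, he₄, α₄, β₄, hα₄, hβ₄, hn₂d⟩ :=
    centre_decomp E v'₂ u'₁ n₂ ν₂ hv₂0 hv₂u₁ hn₂V hn₂U hν₂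
  -- a nontrivial linear relation among the centres
  have hdep : ¬ LinearIndependent ℝ ![m₁, n₁, m₂, n₂] := by
    intro h
    have hc := finrank_span_eq_card h
    rw [range_four'] at hc
    rw [hc] at hplane
    simp at hplane
  obtain ⟨g, hgsum, i, hgi⟩ := Fintype.not_linearIndependent_iff.1 hdep
  have hg : g 0 • m₁ + g 1 • n₁ + g 2 • m₂ + g 3 • n₂ = 0 := by
    simpa [Fin.sum_univ_four] using hgsum
  -- relations among g and the coefficients of the centres
  have hrelE : (g 0 * α₁ + g 3 * β₄) • u'₁ + (g 0 * β₁ + g 1 * α₂) • v'₁ +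
      (g 1 * β₂ + g 2 * α₃) • u'₂ + (g 2 * β₃ + g 3 * α₄) • v'₂ ∈ E := by
    have heq : (g 0 * α₁ + g 3 * β₄) • u'₁ + (g 0 * β₁ + g 1 * α₂) • v'₁ +
        (g 1 * β₂ + g 2 * α₃) • u'₂ + (g 2 * β₃ + g 3 * α₄) • v'₂ =
        -(g 0 • e₁ + g 1 • e₂ + g 2 • e₃ + g 3 • e₄) := by
      rw [hm₁d, hn₁d, hm₂d, hn₂d] at hg
      linear_combination (norm := module) hg
    rw [heq]
    exact neg_mem (add_mem (add_mem (add_mem (smul_mem _ _ he₁) (smul_mem _ _ he₂))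
      (smul_mem _ _ he₃)) (smul_mem _ _ he₄))
  obtain ⟨hr0, hr1, hr2, hr3⟩ := K hrelE
  have hg1 : g 1 ≠ 0 := by
    intro h1
    have h0 : g 0 = 0 := by
      have h := hr1; rw [h1] at h
      simpa [mul_eq_zero, hβ₁] using h
    have h2 : g 2 = 0 := by
      have h := hr2; rw [h1] at h
      simpa [mul_eq_zero, hα₃] using h
    have h3 : g 3 = 0 := by
      have h := hr3; rw [h2] at h
      simpa [mul_eq_zero, hα₄] using h
    fin_cases i
    · exact hgi h0
    · exact hgi h1
    · exact hgi h2
    · exact hgi h3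
  -- the main chain
  intro x hx hx0
  obtain ⟨h1V, h10, a₁, b₁, hstep1⟩ := hμ₁ x hx hx0
  obtain ⟨h2U, h20, a₂, b₂, hstep2⟩ := hν₁ _ h1V h10
  obtain ⟨h3V, h30, a₃, b₃, hstep3⟩ := hμ₂ _ h2U h20
  obtain ⟨h4U, h40, a₄, b₄, hstep4⟩ := hν₂ _ h3V h30
  set A := a₄ * a₃ * a₂ * a₁ with hAdef
  set B := a₄ * a₃ * a₂ * b₁ with hBdef
  set C := a₄ * a₃ * b₂ with hCdef
  set D := a₄ * b₃ with hDdef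
  have hyx : ν₂ (μ₂ (ν₁ (μ₁ x))) = A • x + B • m₁ + C • n₁ + D • m₂ + b₄ • n₂ := by
    rw [hstep4, hstep3, hstep2, hstep1, hAdef, hBdef, hCdef, hDdef]
    module
  obtain ⟨ex, hex, t₀, hxd⟩ := (mem_sup_span_singleton_iff E u'₁ x).1 hx
  obtain ⟨ey, hey, t, hyd⟩ := (mem_sup_span_singleton_iff E u'₁ _).1 h4U
  have hcoefE : (A * t₀ + B * α₁ + b₄ * β₄ - t) • u'₁ + (B * β₁ + C * α₂) • v'₁ +
      (C * β₂ + D * α₃) • u'₂ + (D * β₃ + b₄ * α₄) • v'₂ ∈ E := by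
    have heq : (A * t₀ + B * α₁ + b₄ * β₄ - t) • u'₁ + (B * β₁ + C * α₂) • v'₁ +
        (C * β₂ + D * α₃) • u'₂ + (D * β₃ + b₄ * α₄) • v'₂ =
        ey - (A • ex + B • e₁ + C • e₂ + D • e₃ + b₄ • e₄) := by
      rw [hyd, hxd, hm₁d, hn₁d, hm₂d, hn₂d] at hyx
      linear_combination (norm := module) (-1 : ℝ) • hyx
    rw [heq]
    exact sub_mem hey (add_mem (add_mem (add_mem (add_mem (smul_mem _ _ hex)
      (smul_mem _ _ he₁)) (smul_mem _ _ he₂)) (smul_mem _ _ he₃)) (smul_mem _ _ he₄))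
  obtain ⟨-, hc1, hc2, hc3⟩ := K hcoefE
  have hB : g 1 * B = C * g 0 :=
    mul_right_cancel₀ hβ₁ (by linear_combination g 1 * hc1 - C * hr1)
  have hD : g 1 * D = C * g 2 :=
    mul_right_cancel₀ hα₃ (by linear_combination g 1 * hc2 - C * hr2)
  have hEe : g 1 * b₄ = C * g 3 :=
    mul_right_cancel₀ hα₄ (by linear_combination g 1 * hc3 - C * hr3 - β₃ * hD)
  have hw : g 1 • (B • m₁ + C • n₁ + D • m₂ + b₄ • n₂) = 0 := by
    have heq : g 1 • (B • m₁ + C • n₁ + D • m₂ + b₄ • n₂) =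
        C • (g 0 • m₁ + g 1 • n₁ + g 2 • m₂ + g 3 • n₂) := by
      simp only [smul_add, smul_smul]
      rw [hB, hD, hEe, mul_comm (g 1) C]
    rw [heq, hg, smul_zero]
  have hw0 : B • m₁ + C • n₁ + D • m₂ + b₄ • n₂ = 0 :=
    (smul_eq_zero.1 hw).resolve_left hg1
  have hyA : ν₂ (μ₂ (ν₁ (μ₁ x))) = A • x := by
    linear_combination (norm := module) hyx + hw0
  have hA : A ≠ 0 := by
    intro h
    rw [h, zero_smul] at hyA
    exact h40 hyA
  exact ⟨A, hA, hyA⟩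
end

section
/- Let p be a unit quaternion and d a quaternion with p conj(d) + d conj(p) = 0. Then the map x ↦ (p + εd) x (conj(p) − ε conj(d)), restricted to dual quaternions of the form x = 1 + ε(x₁ i + x₂ j + x₃ k), sends such elements to elements of the same form, and the induced map on (x₁,x₂,x₃) ∈ ℝ³ is an isometry (a rigid body displacement: rotation by p composed with a translation determined by d). -/
noncomputable section
open Quaternion DualNumber TrivSqZeroExt

/-- The encoding of a point of ℝ³ as the dual quaternion 1 + ε(x₁i + x₂j + x₃k). -/
def Pt (v : EuclideanSpace ℝ (Fin 3)) : DQ :=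
  toDQ 1 ⟨0, v 0, v 1, v 2⟩

/-! The sandwich `(p + εd)(1 + εx)(p* - εd*)` has primal part `pp*` and dual part
`pxp* + (dp* - pd*)`: a conjugation of `x` followed by a translation by a pure quaternion.
For a unit `p` the conjugation is an isometry of `ℍ` preserving pure quaternions, and pure
quaternions are an isometric copy of `ℝ³`. -/

theorem toDQ_mul (a b c e : ℍ[ℝ]) : toDQ a b * toDQ c e = toDQ (a * c) (a * e + b * c) :=
  ((map_mul (dualNumberEquiv (R := ℝ)).symm _ _).symm :)

theorem toDQ_mul_toDQ_one_mul_toDQ_star (p d x : ℍ[ℝ]) :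
    toDQ p d * toDQ 1 x * toDQ (star p) (-star d) =
      toDQ (p * star p) (p * x * star p + (d * star p - p * star d)) := by
  rw [toDQ_mul, toDQ_mul]
  congr 1 <;> noncomm_ring

namespace Quaternion

section CharZero

variable {R : Type*} [CommRing R] [NoZeroDivisors R] [CharZero R]

theorem re_mul_mul_star_eq_zero (p : ℍ[R]) {x : ℍ[R]} (hx : x.re = 0) :
    (p * x * star p).re = 0 := by
  rw [← star_eq_neg] at hx ⊢
  simp only [star_mul, star_star, hx, mul_neg, neg_mul, mul_assoc]

theorem re_mul_star_sub_mul_star (p d : ℍ[R]) : (d * star p - p * star d).re = 0 := by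
  rw [← star_eq_neg]
  simp only [star_sub, star_mul, star_star, neg_sub]

end CharZero

theorem norm_eq_one_of_mul_star_eq_one {p : ℍ[ℝ]} (hp : p * star p = 1) : ‖p‖ = 1 := by
  rw [self_mul_star, ← coe_one, coe_inj, normSq_eq_norm_mul_self, mul_self_eq_one_iff] at hp
  exact hp.resolve_right fun h => by linarith [norm_nonneg p]

theorem isometry_mul_mul_star {p : ℍ[ℝ]} (hp : ‖p‖ = 1) : Isometry fun x => p * x * star p :=
  Isometry.of_dist_eq fun x y => by
    simp only [dist_eq_norm, ← mul_sub, ← sub_mul, norm_mul, norm_star, hp, one_mul, mul_one]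

end Quaternion

def toPure (v : EuclideanSpace ℝ (Fin 3)) : ℍ[ℝ] := ⟨0, v 0, v 1, v 2⟩

def ofPure (q : ℍ[ℝ]) : EuclideanSpace ℝ (Fin 3) := !₂[q.imI, q.imJ, q.imK]

section toPure

variable (v : EuclideanSpace ℝ (Fin 3))

@[simp] theorem re_toPure : (toPure v).re = 0 := rfl
@[simp] theorem imI_toPure : (toPure v).imI = v 0 := rfl
@[simp] theorem imJ_toPure : (toPure v).imJ = v 1 := rfl
@[simp] theorem imK_toPure : (toPure v).imK = v 2 := rfl

theorem Pt_eq_toDQ_one_toPure : Pt v = toDQ 1 (toPure v) := rfl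

end toPure

theorem toPure_ofPure {q : ℍ[ℝ]} (hq : q.re = 0) : toPure (ofPure q) = q := by
  ext <;> simp [ofPure, hq]

theorem isometry_toPure : Isometry toPure :=
  Isometry.of_dist_eq fun u v => by
    rw [dist_eq_norm, EuclideanSpace.dist_eq, norm_eq_sqrt_real_inner, inner_self, normSq_def']
    simp [Fin.sum_univ_three, Real.dist_eq, sq_abs]

theorem action_is_isometry_general (p d : Quaternion ℝ)
    (hp : p * star p = 1) :
    ∃ f : EuclideanSpace ℝ (Fin 3) → EuclideanSpace ℝ (Fin 3),
      Isometry f ∧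
      ∀ v : EuclideanSpace ℝ (Fin 3),
        toDQ p d * Pt v * toDQ (star p) (-(star d)) = Pt (f v) := by
  set g : ℍ[ℝ] → ℍ[ℝ] := fun x => p * x * star p + (d * star p - p * star d)
  have hg : Isometry g := (IsometryEquiv.addRight _).isometry.comp
    (isometry_mul_mul_star (norm_eq_one_of_mul_star_eq_one hp))
  have hg_pure (v : EuclideanSpace ℝ (Fin 3)) : toPure (ofPure (g (toPure v))) = g (toPure v) :=
    toPure_ofPure <| by
      rw [re_add, re_mul_mul_star_eq_zero p (re_toPure v), re_mul_star_sub_mul_star, add_zero]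
  refine ⟨fun v => ofPure (g (toPure v)), Isometry.of_dist_eq fun u v => ?_, fun v => ?_⟩
  · rw [← isometry_toPure.dist_eq, hg_pure, hg_pure, hg.dist_eq, isometry_toPure.dist_eq]
  · rw [Pt_eq_toDQ_one_toPure, Pt_eq_toDQ_one_toPure, hg_pure,
      toDQ_mul_toDQ_one_mul_toDQ_star, hp]

/-- If p is a unit quaternion and p·conj(d) + d·conj(p) = 0, then
x ↦ (p + εd)·x·(conj(p) − ε·conj(d)) maps point-encoding dual quaternions to
point-encoding dual quaternions, and the induced map on ℝ³ is an isometry. -/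
theorem action_is_isometry (p d : Quaternion ℝ)
    (hp : p * star p = 1) (hs : p * star d + d * star p = 0) :
    ∃ f : EuclideanSpace ℝ (Fin 3) → EuclideanSpace ℝ (Fin 3),
      Isometry f ∧
      ∀ v : EuclideanSpace ℝ (Fin 3),
        toDQ p d * Pt v * toDQ (star p) (-(star d)) = Pt (f v) :=
  action_is_isometry_general p d hp
end
end
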